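/- arXiv:1507.05335 — 2 statements merged into one kernel-verified Lean document; each statement's English description precedes it below -/
import Mathlib

section
/- Let G be any graph on n vertices and H any graph on N vertices. For each nonzero Laplacian eigenvalue ν of G with eigenvector X (orthogonal to the all-ones vector), ν + 1 is a Laplacian eigenvalue of H ∘ G with multiplicity N, with eigenvectors (0; X ⊗ e_j) for j = 1,…,N. -/
open SimpleGraph Filter Matrix

/-- The corona product `H ∘ G`: one copy of `H` and, for each vertex `a` of `H`,
a copy of `G` whose vertices are all joined to `a`. -/
def corona {α β : Type*} (H : SimpleGraph α) (G : SimpleGraph β) :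
    SimpleGraph (α ⊕ α × β) where
  Adj x y :=
    match x, y with
    | Sum.inl a, Sum.inl a' => H.Adj a a'
    | Sum.inl a, Sum.inr p => a = p.1
    | Sum.inr p, Sum.inl a => a = p.1
    | Sum.inr p, Sum.inr q => p.1 = q.1 ∧ G.Adj p.2 q.2
  symm := ⟨by
    rintro (a | p) (a' | q) h
    · exact SimpleGraph.Adj.symm h
    · exact h
    · exact h
    · exact ⟨h.1.symm, SimpleGraph.Adj.symm h.2⟩⟩
  loopless := ⟨by
    rintro (a | p) h
    · exact H.irrefl h
    · exact G.irrefl h.2⟩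

instance coronaAdjDecidable {α β : Type*} [DecidableEq α]
    (H : SimpleGraph α) (G : SimpleGraph β)
    [DecidableRel H.Adj] [DecidableRel G.Adj] : DecidableRel (corona H G).Adj := fun x y =>
  match x, y with
  | Sum.inl a, Sum.inl a' => inferInstanceAs (Decidable (H.Adj a a'))
  | Sum.inl a, Sum.inr p => inferInstanceAs (Decidable (a = p.1))
  | Sum.inr p, Sum.inl a => inferInstanceAs (Decidable (a = p.1))
  | Sum.inr p, Sum.inr q => inferInstanceAs (Decidable (p.1 = q.1 ∧ G.Adj p.2 q.2))

/-- Vertex type of the `m`-th iterated corona graph generated by a seed on `V`. -/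
def coronaVert (V : Type*) : ℕ → Type _
  | 0 => V
  | m + 1 => coronaVert V m ⊕ coronaVert V m × V

/-- The iterated Corona graphs: `G^(0) = G`, `G^(m+1) = G^(m) ∘ G`. -/
def coronaIter {V : Type*} (G : SimpleGraph V) : (m : ℕ) → SimpleGraph (coronaVert V m)
  | 0 => G
  | m + 1 => corona (coronaIter G m) G

instance coronaVertFintype {V : Type*} [Fintype V] : (m : ℕ) → Fintype (coronaVert V m)
  | 0 => inferInstanceAs (Fintype V)
  | m + 1 =>
    have := coronaVertFintype (V := V) m
    inferInstanceAs (Fintype (coronaVert V m ⊕ coronaVert V m × V))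

instance coronaVertDecEq {V : Type*} [DecidableEq V] : (m : ℕ) → DecidableEq (coronaVert V m)
  | 0 => inferInstanceAs (DecidableEq V)
  | m + 1 =>
    have := coronaVertDecEq (V := V) m
    inferInstanceAs (DecidableEq (coronaVert V m ⊕ coronaVert V m × V))

instance coronaIterAdjDecidable {V : Type*} [DecidableEq V] (G : SimpleGraph V)
    [DecidableRel G.Adj] : (m : ℕ) → DecidableRel (coronaIter G m).Adj
  | 0 => inferInstanceAs (DecidableRel G.Adj)
  | m + 1 =>
    have := coronaIterAdjDecidable G m
    inferInstanceAs (DecidableRel (corona (coronaIter G m) G).Adj)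


section coronaAux
variable {α β : Type*} [Fintype α] [Fintype β] [DecidableEq α] [DecidableEq β]
    (H : SimpleGraph α) (G : SimpleGraph β) [DecidableRel H.Adj] [DecidableRel G.Adj]

omit [Fintype α] [Fintype β] [DecidableEq α] [DecidableEq β] [DecidableRel H.Adj]
  [DecidableRel G.Adj] in
lemma corona_adj_ll (a a' : α) : (corona H G).Adj (Sum.inl a) (Sum.inl a') ↔ H.Adj a a' :=
  Iff.rfl

omit [Fintype α] [Fintype β] [DecidableEq α] [DecidableEq β] [DecidableRel H.Adj]
  [DecidableRel G.Adj] in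
lemma corona_adj_lr (a : α) (p : α × β) : (corona H G).Adj (Sum.inl a) (Sum.inr p) ↔ a = p.1 :=
  Iff.rfl

omit [Fintype α] [Fintype β] [DecidableEq α] [DecidableEq β] [DecidableRel H.Adj]
  [DecidableRel G.Adj] in
lemma corona_adj_rl (a : α) (p : α × β) : (corona H G).Adj (Sum.inr p) (Sum.inl a) ↔ a = p.1 :=
  Iff.rfl

omit [Fintype α] [Fintype β] [DecidableEq α] [DecidableEq β] [DecidableRel H.Adj]
  [DecidableRel G.Adj] in
lemma corona_adj_rr (p q : α × β) :
    (corona H G).Adj (Sum.inr p) (Sum.inr q) ↔ p.1 = q.1 ∧ G.Adj p.2 q.2 :=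
  Iff.rfl

lemma corona_nf_sum_inl (g : α × β → ℝ) (a : α) :
    ∑ u ∈ (corona H G).neighborFinset (Sum.inl a), Sum.elim (0 : α → ℝ) g u =
      ∑ b, g (a, b) := by
  rw [neighborFinset_eq_filter, Finset.sum_filter, Fintype.sum_sum_type]
  simp only [corona_adj_ll, corona_adj_lr, Fintype.sum_prod_type, Sum.elim_inl, Sum.elim_inr,
    Pi.zero_apply, ite_self, Finset.sum_const_zero, zero_add]
  rw [Finset.sum_comm]
  simp [Finset.sum_ite_eq]

lemma corona_nf_sum_inr (g : α × β → ℝ) (a : α) (b : β) :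
    ∑ u ∈ (corona H G).neighborFinset (Sum.inr (a, b)), Sum.elim (0 : α → ℝ) g u =
      ∑ b' ∈ G.neighborFinset b, g (a, b') := by
  rw [neighborFinset_eq_filter, Finset.sum_filter, Fintype.sum_sum_type,
    neighborFinset_eq_filter, Finset.sum_filter]
  simp [corona_adj_rl, corona_adj_rr, Fintype.sum_prod_type, ite_and, Finset.sum_ite_eq, Finset.card_filter, add_comm]

lemma corona_degree_inr (a : α) (b : β) :
    (corona H G).degree (Sum.inr (a, b)) = G.degree b + 1 := by
  rw [degree, neighborFinset_eq_filter, Finset.card_filter, Fintype.sum_sum_type,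
    degree, neighborFinset_eq_filter, Finset.card_filter]
  simp only [corona_adj_rl, corona_adj_rr, Fintype.sum_prod_type, ite_and]
  have h1 : ∑ x : α, ∑ y : β, (if a = x then (if G.Adj b y then (1:ℕ) else 0) else 0) =
      ∑ y : β, if G.Adj b y then 1 else 0 := by
    rw [Finset.sum_comm]; simp [Finset.sum_ite_eq]
  rw [h1]
  simp only [Finset.sum_ite_eq', Finset.mem_univ, if_true, ← Finset.card_filter]
  omega

end coronaAux

/-- for each nonzero Laplacian eigenvalue `ν` of `G` with eigenvector `X`
orthogonal to the all-ones vector, `ν + 1` is a Laplacian eigenvalue of `H ∘ G` with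
multiplicity `|V(H)|`, with eigenvectors `(0; X ⊗ e_j)`. -/
theorem corona_lap_eigenvalue_copies {α β : Type*} [Fintype α] [Fintype β]
    [DecidableEq α] [DecidableEq β] (H : SimpleGraph α) (G : SimpleGraph β)
    [DecidableRel H.Adj] [DecidableRel G.Adj] (ν : ℝ) (hν : ν ≠ 0) (X : β → ℝ)
    (hX : X ≠ 0) (hEig : (G.lapMatrix ℝ) *ᵥ X = ν • X) (horth : ∑ b, X b = 0) :
    (∀ j : α,
      ((corona H G).lapMatrix ℝ) *ᵥ
          (Sum.elim (0 : α → ℝ) fun p : _ × β => if p.1 = j then X p.2 else 0) =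
        (ν + 1) • (Sum.elim (0 : α → ℝ) fun p : _ × β => if p.1 = j then X p.2 else 0)) ∧
    LinearIndependent ℝ
      (fun j : α =>
        Sum.elim (0 : α → ℝ) fun p : _ × β => if p.1 = j then X p.2 else 0) := by
  constructor
  · intro j
    funext v
    rw [lapMatrix_mulVec_apply]
    cases v with
    | inl a =>
      rw [corona_nf_sum_inl]
      simp only [Sum.elim_inl, Pi.zero_apply, mul_zero, zero_sub, Pi.smul_apply, smul_eq_mul]
      by_cases h : a = j
      · subst h; simp [horth]
      · simp [h]
    | inr p =>
      obtain ⟨a, b⟩ := p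
      rw [corona_nf_sum_inr, corona_degree_inr]
      simp only [Sum.elim_inr, Pi.smul_apply, smul_eq_mul]
      by_cases h : a = j
      · subst h
        simp only [if_pos rfl]
        have hb := congrFun hEig b
        rw [lapMatrix_mulVec_apply] at hb
        simp only [Pi.smul_apply, smul_eq_mul] at hb
        push_cast
        linarith [hb]
      · simp [h]
  · obtain ⟨b0, hb0⟩ : ∃ b, X b ≠ 0 := by
      by_contra h; push_neg at h; exact hX (funext h)
    rw [Fintype.linearIndependent_iff]
    intro c hc j
    have hcj := congrFun hc (Sum.inr (j, b0))
    simp only [Finset.sum_apply, Pi.smul_apply, Sum.elim_inr, smul_eq_mul, Pi.zero_apply,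
      mul_ite, mul_zero, Finset.sum_ite_eq, Finset.mem_univ, if_true] at hcj
    exact (mul_eq_zero.mp hcj).resolve_right hb0
end

section
/- In the iterated corona graph S_k^(m) generated by the star graph S_k on k+1 ≥ 4 vertices, 0 is an adjacency eigenvalue with multiplicity at least k(k−2)(k+1)^(m−1) for m ≥ 1. In particular, for m = 1, the corona product S_k ∘ S_k has 0 as an adjacency eigenvalue with multiplicity at least k(k−2). -/
open SimpleGraph Filter Matrix

/-- The star graph `S_k`: center `0` joined to `k` leaves. -/
def starGraph (k : ℕ) : SimpleGraph (Fin (k + 1)) where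
  Adj x y := x ≠ y ∧ (x = 0 ∨ y = 0)
  symm := ⟨by rintro x y ⟨hne, h⟩; exact ⟨hne.symm, h.symm⟩⟩
  loopless := ⟨by rintro x ⟨hne, _⟩; exact hne rfl⟩

instance starGraphAdjDecidable (k : ℕ) : DecidableRel (_root_.starGraph k).Adj := fun x y =>
  inferInstanceAs (Decidable (x ≠ y ∧ (x = 0 ∨ y = 0)))

section Aux

open Finset

variable {k : ℕ}

/-- The `i`-th "free" leaf of the star. -/
def sLeaf (k : ℕ) (i : Fin (k - 1)) : Fin (k + 1) := ⟨i.1 + 1, by omega⟩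

/-- The special leaf of the star (index `k`). -/
def sSpec (k : ℕ) : Fin (k + 1) := ⟨k, by omega⟩

/-- Weight function giving kernel vectors of the star. -/
noncomputable def sW (k : ℕ) (i : Fin (k - 1)) (j : Fin (k + 1)) : ℝ :=
  (if j = sLeaf k i then 1 else 0) - (if j = sSpec k then 1 else 0)

lemma sLeaf_ne_zero (i : Fin (k - 1)) : sLeaf k i ≠ 0 := by
  intro h
  have := congrArg Fin.val h
  simp [sLeaf] at this

lemma sSpec_ne_zero (hk : 3 ≤ k) : sSpec k ≠ 0 := by
  intro h
  have := congrArg Fin.val h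
  simp [sSpec] at this
  omega

lemma sLeaf_ne_sSpec (i : Fin (k - 1)) : sLeaf k i ≠ sSpec k := by
  intro h
  have := congrArg Fin.val h
  have hi := i.2
  simp [sLeaf, sSpec] at this
  omega

lemma sLeaf_injective : Function.Injective (sLeaf (k := k)) := by
  intro i i' h
  have := congrArg Fin.val h
  simp [sLeaf] at this
  exact Fin.ext this

lemma sum_sW (i : Fin (k - 1)) : ∑ j : Fin (k + 1), sW k i j = 0 := by
  simp [sW, Finset.sum_sub_distrib]

lemma sW_sLeaf (i i' : Fin (k - 1)) :
    sW k i' (sLeaf k i) = if i' = i then 1 else 0 := by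
  by_cases h : i' = i
  · subst h
    rw [sW, if_pos rfl, if_neg (sLeaf_ne_sSpec i'), sub_zero, if_pos rfl]
  · rw [sW, if_neg (fun he => h (sLeaf_injective he).symm),
      if_neg (sLeaf_ne_sSpec i), sub_zero, if_neg h]

lemma starGraph_adj_of_ne_zero {j t : Fin (k + 1)} (ht : t ≠ 0) :
    (_root_.starGraph k).Adj j t ↔ j = 0 := by
  constructor
  · rintro ⟨hne, h | h⟩
    · exact h
    · exact absurd h ht
  · rintro rfl
    exact ⟨fun h => ht h.symm, Or.inl rfl⟩

/-- Key star computation: summing `sW` over neighbours of any vertex gives `0`. -/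
lemma starAdjSum (hk : 3 ≤ k) (i : Fin (k - 1)) (j : Fin (k + 1)) :
    ∑ j' : Fin (k + 1), (if (_root_.starGraph k).Adj j j' then sW k i j' else 0) = 0 := by
  have key : ∀ t : Fin (k + 1),
      ∑ j' : Fin (k + 1),
          (if (_root_.starGraph k).Adj j j' then (if j' = t then (1 : ℝ) else 0) else 0)
        = if (_root_.starGraph k).Adj j t then (1 : ℝ) else 0 := by
    intro t
    rw [Finset.sum_eq_single t]
    · simp
    · intro b _ hb; simp [hb]
    · intro h; exact absurd (mem_univ t) h
  have split : ∀ j' : Fin (k + 1),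
      (if (_root_.starGraph k).Adj j j' then sW k i j' else 0)
        = (if (_root_.starGraph k).Adj j j' then (if j' = sLeaf k i then (1 : ℝ) else 0) else 0)
          - (if (_root_.starGraph k).Adj j j' then (if j' = sSpec k then (1 : ℝ) else 0) else 0) := by
    intro j'
    rw [sW]
    split <;> simp
  rw [Finset.sum_congr rfl (fun j' _ => split j'), Finset.sum_sub_distrib, key, key,
    if_congr (starGraph_adj_of_ne_zero (sLeaf_ne_zero i)) rfl rfl,
    if_congr (starGraph_adj_of_ne_zero (sSpec_ne_zero hk)) rfl rfl, sub_self]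

variable {α : Type*} [Fintype α] [DecidableEq α]

/-- The linear parametrisation of kernel vectors of the corona with a star. -/
noncomputable def sL (k : ℕ) (α : Type*) [Fintype α] :
    (α × Fin (k - 1) → ℝ) →ₗ[ℝ] (α ⊕ α × Fin (k + 1) → ℝ) where
  toFun c := Sum.elim (fun _ => 0) (fun p => ∑ i, c (p.1, i) * sW k i p.2)
  map_add' c d := by
    funext v
    rcases v with a | p <;> simp [add_mul, Finset.sum_add_distrib]
  map_smul' r c := by
    funext v
    rcases v with a | p <;> simp [Finset.mul_sum, mul_assoc]

set_option linter.unusedSectionVars false in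
@[simp] lemma sL_apply_inl (c : α × Fin (k - 1) → ℝ) (a : α) :
    sL k α c (Sum.inl a) = 0 := rfl

set_option linter.unusedSectionVars false in
@[simp] lemma sL_apply_inr (c : α × Fin (k - 1) → ℝ) (p : α × Fin (k + 1)) :
    sL k α c (Sum.inr p) = ∑ i, c (p.1, i) * sW k i p.2 := rfl

lemma sL_injective (k : ℕ) (α : Type*) [Fintype α] : Function.Injective (sL k α) := by
  rw [injective_iff_map_eq_zero]
  intro c hc
  funext p
  obtain ⟨a, i⟩ := p
  have h := congrFun hc (Sum.inr (a, sLeaf k i))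
  simpa [sW_sLeaf, Finset.sum_ite_eq'] using h

lemma sL_mem_ker (hk : 3 ≤ k) (H : SimpleGraph α) [DecidableRel H.Adj]
    (c : α × Fin (k - 1) → ℝ) :
    Matrix.toLin' ((corona H (_root_.starGraph k)).adjMatrix ℝ) (sL k α c) = 0 := by
  funext v
  rw [Matrix.toLin'_apply]
  show ((corona H (_root_.starGraph k)).adjMatrix ℝ).mulVec (sL k α c) v = 0
  rw [Matrix.mulVec, dotProduct, Fintype.sum_sum_type]
  rcases v with a | ⟨a, j⟩
  · have h1 : ∀ a' : α,
        ((corona H (_root_.starGraph k)).adjMatrix ℝ) (Sum.inl a) (Sum.inl a') * sL k α c (Sum.inl a')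
          = 0 := by
      intro a'; simp
    have h2 : ∀ p : α × Fin (k + 1),
        ((corona H (_root_.starGraph k)).adjMatrix ℝ) (Sum.inl a) (Sum.inr p)
          = if a = p.1 then 1 else 0 := by
      intro p
      rw [SimpleGraph.adjMatrix_apply]
      rfl
    simp only [h1, h2, Finset.sum_const_zero, zero_add]
    rw [Fintype.sum_prod_type, Finset.sum_eq_single a]
    · simp only [sL_apply_inr, eq_self_iff_true, if_true, one_mul]
      rw [Finset.sum_comm]
      simp [← Finset.mul_sum, sum_sW]
    · intro b _ hb
      simp [Ne.symm hb]
    · intro h; exact absurd (mem_univ a) h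
  · have h1 : ∀ a' : α,
        ((corona H (_root_.starGraph k)).adjMatrix ℝ) (Sum.inr (a, j)) (Sum.inl a')
          * sL k α c (Sum.inl a') = 0 := by
      intro a'; simp
    have h2 : ∀ p : α × Fin (k + 1),
        ((corona H (_root_.starGraph k)).adjMatrix ℝ) (Sum.inr (a, j)) (Sum.inr p)
          = if a = p.1 ∧ (_root_.starGraph k).Adj j p.2 then 1 else 0 := by
      intro p
      rw [SimpleGraph.adjMatrix_apply]
      rfl
    simp only [h1, h2, Finset.sum_const_zero, zero_add]
    rw [Fintype.sum_prod_type, Finset.sum_eq_single a]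
    · simp only [sL_apply_inr, eq_self_iff_true, true_and, ite_mul, one_mul, zero_mul]
      have split : ∀ j' : Fin (k + 1),
          (if (_root_.starGraph k).Adj j j' then (∑ i, c (a, i) * sW k i j') else 0)
            = ∑ i, (if (_root_.starGraph k).Adj j j' then c (a, i) * sW k i j' else 0) := by
        intro j'
        split <;> simp
      rw [Finset.sum_congr rfl (fun j' _ => split j'), Finset.sum_comm]
      apply Finset.sum_eq_zero
      intro i _
      have mulform : ∀ j' : Fin (k + 1),
          (if (_root_.starGraph k).Adj j j' then c (a, i) * sW k i j' else 0)
            = c (a, i) * (if (_root_.starGraph k).Adj j j' then sW k i j' else 0) := by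
        intro j'; rw [mul_ite, mul_zero]
      rw [Finset.sum_congr rfl (fun j' _ => mulform j'), ← Finset.mul_sum,
        starAdjSum hk i j, mul_zero]
    · intro b _ hb
      simp [Ne.symm hb]
    · intro h; exact absurd (mem_univ a) h

lemma aux_corona_star_ker (hk : 3 ≤ k) (H : SimpleGraph α) [DecidableRel H.Adj] :
    Fintype.card α * (k - 1) ≤
      Module.finrank ℝ
        (LinearMap.ker (Matrix.toLin' ((corona H (_root_.starGraph k)).adjMatrix ℝ))) := by
  classical
  set K := LinearMap.ker (Matrix.toLin' ((corona H (_root_.starGraph k)).adjMatrix ℝ))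
  have hmem : ∀ c, sL k α c ∈ K := fun c => by
    simpa [K, LinearMap.mem_ker] using sL_mem_ker hk H c
  let f : (α × Fin (k - 1) → ℝ) →ₗ[ℝ] K := (sL k α).codRestrict K hmem
  have hf : Function.Injective f := fun c d h => by
    apply sL_injective k α
    exact congrArg Subtype.val h
  have := LinearMap.finrank_le_finrank_of_injective hf
  rwa [Module.finrank_fintype_fun_eq_card, Fintype.card_prod, Fintype.card_fin] at this

lemma card_coronaVert (V : Type*) [Fintype V] (m : ℕ) :
    Fintype.card (coronaVert V m) = Fintype.card V * (Fintype.card V + 1) ^ m := by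
  induction m with
  | zero =>
    show Fintype.card V = _
    simp
  | succ m ih =>
    have h : Fintype.card (coronaVert V (m + 1))
        = Fintype.card (coronaVert V m ⊕ coronaVert V m × V) := rfl
    rw [h, Fintype.card_sum, Fintype.card_prod, ih, pow_succ]
    ring

end Aux
/-- in `S_k^(m)` (`k ≥ 3`, `m ≥ 1`), `0` is an adjacency eigenvalue with
multiplicity at least `k(k-2)(k+1)^(m-1)`; in particular for `m = 1` at least `k(k-2)`. -/
theorem corona_star_kernel (k : ℕ) (hk : 3 ≤ k) (m : ℕ) (hm : 1 ≤ m) :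
    k * (k - 2) * (k + 1) ^ (m - 1) ≤
      Module.finrank ℝ
        (LinearMap.ker (Matrix.toLin' ((coronaIter (_root_.starGraph k) m).adjMatrix ℝ))) ∧
    k * (k - 2) ≤
      Module.finrank ℝ
        (LinearMap.ker (Matrix.toLin' ((coronaIter (_root_.starGraph k) 1).adjMatrix ℝ))) := by
  have main : ∀ n : ℕ,
      k * (k - 2) * (k + 1) ^ n ≤
        Module.finrank ℝ
          (LinearMap.ker (Matrix.toLin' ((coronaIter (_root_.starGraph k) (n + 1)).adjMatrix ℝ))) := by
    intro n
    have h := aux_corona_star_ker (α := coronaVert (Fin (k + 1)) n) hk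
      (coronaIter (_root_.starGraph k) n)
    rw [card_coronaVert, Fintype.card_fin] at h
    refine le_trans ?_ h
    calc k * (k - 2) * (k + 1) ^ n
        ≤ ((k + 1) * (k - 1)) * (k + 1 + 1) ^ n :=
          Nat.mul_le_mul (Nat.mul_le_mul (by omega) (by omega))
            (Nat.pow_le_pow_left (by omega) n)
      _ = (k + 1) * (k + 1 + 1) ^ n * (k - 1) := by ring
  obtain ⟨n, rfl⟩ : ∃ n, m = n + 1 := ⟨m - 1, by omega⟩
  exact ⟨by simpa using main n, by simpa using main 0⟩
end
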